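/- In a Matsuo algebra of Monster type η over a field of characteristic ≠ 2, if three axes p, q, r form a line of the Fischer space (so pq = (η/2)(p + q − r) etc.), then for pairwise 'double axes' d₁ = p₁ + p₂, d₂ = q₁ + q₂, d₃ = r₁ + r₂ built from two disjoint collinear triples with cross products of the same type, one has d₁d₂ = η(d₁ + d₂ − d₃) whenever each product pᵢqⱼ = (η/2)(pᵢ + qⱼ − t) with t a summand of d₃. -/
import Mathlib

theorem stmt16 (F : Type*) [Field F] (hchar : (2 : F) ≠ 0)
    (A : Type*) [NonUnitalNonAssocRing A] [Module F A]
    [SMulCommClass F A A] [IsScalarTower F A A]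
    (η : F) (p₁ p₂ q₁ q₂ r₁ r₂ : A)
    (h11 : p₁ * q₁ = (η/2) • (p₁ + q₁ - r₁))
    (h12 : p₁ * q₂ = (η/2) • (p₁ + q₂ - r₂))
    (h21 : p₂ * q₁ = (η/2) • (p₂ + q₁ - r₂))
    (h22 : p₂ * q₂ = (η/2) • (p₂ + q₂ - r₁)) :
    (p₁ + p₂) * (q₁ + q₂) =
      η • ((p₁ + p₂) + (q₁ + q₂) - (r₁ + r₂)) := by
  rw [add_mul, mul_add, mul_add, h11, h12, h21, h22]
  match_scalars <;> field_simp <;> ring
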